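/- Let 0 < ε ≤ 0.1 and n ≥ 10, and let T be a positive integer with 4ε²·T ≤ ln(n/10). Then for every event E ⊆ Ω^T, | P_mix^T(E) − P_0^T(E) | ≤ 1/4. -/

import Mathlib

/-! Since `P_0^T` is uniform, Cauchy–Schwarz bounds the total variation distance to it by
`½ √χ²(P_mix^T ‖ P_0^T)`. Writing `P_v = P_0 (1 + 2ε s_v)` with the sign `s_v = ±1` of agreement
between the correct arm and the `v`-th advice bit, the signs are centred and orthogonal under `P_0`,
so `Σ P_u P_v / P_0 = 1 + 4ε² [u = v]` for one round and its `T`-th power for `T` rounds.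
Averaging over `u, v` gives `χ² = ((1 + 4ε²)^T - 1) / n ≤ exp(4ε²T) / n ≤ 1/10`. -/

open scoped BigOperators

/-- The sample space of a single round: an advice vector `a ∈ {0,1}ⁿ`
and a correct-arm indicator `c ∈ {0,1}`. -/
abbrev Omg (n : ℕ) := (Fin n → Bool) × Bool

/-- Under `P0`, the advice vector is uniform on `{0,1}ⁿ` and the correct-arm
indicator is uniform on `{0,1}`, independently. -/
noncomputable def P0 (n : ℕ) : Omg n → ℝ := fun _ => (1 / 2 : ℝ) ^ (n + 1)

/-- Under `Pv n ε v`, the advice vector is uniform on `{0,1}ⁿ` and, conditionally on it,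
the correct-arm indicator equals its `v`-th entry with probability `1/2 + ε`. -/
noncomputable def Pv (n : ℕ) (ε : ℝ) (v : Fin n) : Omg n → ℝ := fun w =>
  (1 / 2 : ℝ) ^ n * (if w.2 = w.1 v then 1 / 2 + ε else 1 / 2 - ε)

/-- `T`-fold product of a probability mass function on `Omg n`. -/
noncomputable def prodP {n : ℕ} (T : ℕ) (P : Omg n → ℝ) : (Fin T → Omg n) → ℝ :=
  fun g => ∏ t, P (g t)

/-- The uniform mixture `P_mix^T = (1/n) Σ_v P_v^T`. -/
noncomputable def Pmix (n : ℕ) (ε : ℝ) (T : ℕ) : (Fin T → Omg n) → ℝ := fun g =>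
  (1 / (n : ℝ)) * ∑ v : Fin n, prodP T (Pv n ε v) g

open Finset

section

variable {α : Type*} [Fintype α]

lemma two_mul_abs_sum_le_sum_abs_of_sum_eq_zero {d : α → ℝ} (hd : ∑ x, d x = 0)
    (E : Finset α) : 2 * |∑ x ∈ E, d x| ≤ ∑ x, |d x| := by
  classical
  have hcompl : ∑ x ∈ Eᶜ, d x = -∑ x ∈ E, d x := by
    rw [← sum_add_sum_compl E d] at hd
    linarith
  calc 2 * |∑ x ∈ E, d x| = |∑ x ∈ E, d x| + |∑ x ∈ Eᶜ, d x| := by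
        rw [hcompl, abs_neg]
        ring
    _ ≤ ∑ x ∈ E, |d x| + ∑ x ∈ Eᶜ, |d x| :=
        add_le_add (abs_sum_le_sum_abs _ _) (abs_sum_le_sum_abs _ _)
    _ = ∑ x, |d x| := sum_add_sum_compl E _

lemma four_mul_sq_sum_sub_sum_le {p q : α → ℝ} (hpq : ∑ x, p x = ∑ x, q x) (E : Finset α) :
    4 * (∑ x ∈ E, p x - ∑ x ∈ E, q x) ^ 2 ≤ Fintype.card α * ∑ x, (p x - q x) ^ 2 := by
  have hd : ∑ x, (p x - q x) = 0 := by rw [sum_sub_distrib, hpq, sub_self]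
  calc 4 * (∑ x ∈ E, p x - ∑ x ∈ E, q x) ^ 2 = (2 * |∑ x ∈ E, (p x - q x)|) ^ 2 := by
        rw [sum_sub_distrib, mul_pow, sq_abs]
        norm_num
    _ ≤ (∑ x, |p x - q x|) ^ 2 := by
        gcongr
        exact two_mul_abs_sum_le_sum_abs_of_sum_eq_zero hd E
    _ ≤ Fintype.card α * ∑ x, |p x - q x| ^ 2 := sq_sum_le_card_mul_sum_sq
    _ = Fintype.card α * ∑ x, (p x - q x) ^ 2 := by simp_rw [sq_abs]

lemma card_mul_sum_sq_sub_inv_card {f : α → ℝ} (hf : ∑ x, f x = 1) :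
    Fintype.card α * ∑ x, (f x - (Fintype.card α : ℝ)⁻¹) ^ 2
      = Fintype.card α * ∑ x, f x ^ 2 - 1 := by
  have hα : Nonempty α := by
    by_contra h
    simp [not_nonempty_iff.1 h] at hf
  have hN : (Fintype.card α : ℝ) ≠ 0 := by positivity
  simp only [sub_sq, sum_add_distrib, sum_sub_distrib, ← sum_mul, ← mul_sum, hf, sum_const,
    card_univ, nsmul_eq_mul]
  field_simp
  ring

end

lemma one_add_pow_le_exp_mul {x : ℝ} (hx : -1 ≤ x) (T : ℕ) : (1 + x) ^ T ≤ Real.exp (x * T) := by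
  calc (1 + x) ^ T ≤ Real.exp x ^ T :=
        pow_le_pow_left₀ (by linarith) (by linarith [Real.add_one_le_exp x]) T
    _ = Real.exp (x * T) := by rw [← Real.exp_nat_mul, mul_comm]

section SingleRound

variable {n : ℕ}

def agreeSign (v : Fin n) (w : Omg n) : ℝ := if w.2 = w.1 v then 1 else -1

lemma P0_apply (w : Omg n) : P0 n w = (Fintype.card (Omg n) : ℝ)⁻¹ := by
  simp [P0]
  ring

lemma Pv_eq (ε : ℝ) (v : Fin n) (w : Omg n) :
    Pv n ε v w = P0 n w * (1 + 2 * ε * agreeSign v w) := by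
  unfold Pv P0 agreeSign
  split_ifs <;> ring

lemma sum_agreeSign (v : Fin n) : ∑ w, agreeSign v w = 0 :=
  sum_ninvolution (fun w => (w.1, !w.2))
    (fun w => by cases h : w.2 <;> cases h' : w.1 v <;> simp [agreeSign, h, h'])
    (fun w _ => by simp [Prod.ext_iff])
    (fun _ => mem_univ _) (fun w => by simp)

lemma sum_agreeSign_mul_agreeSign (u v : Fin n) :
    ∑ w, agreeSign u w * agreeSign v w = if u = v then (Fintype.card (Omg n) : ℝ) else 0 := by
  split_ifs with huv
  · subst huv
    simp [agreeSign, apply_ite (fun x : ℝ => x * x)]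
  -- flipping the `v`-th advice bit keeps `agreeSign u` and negates `agreeSign v`
  exact sum_ninvolution (fun w => (Function.update w.1 v (!w.1 v), w.2))
    (fun w => by
      cases h : w.2 <;> cases h' : w.1 v <;> simp [agreeSign, h, h', Function.update_of_ne huv])
    (fun w _ => by simp [Prod.ext_iff, funext_iff]; exact ⟨v, by simp⟩)
    (fun _ => mem_univ _) (fun w => by simp)

lemma sum_Pv (ε : ℝ) (v : Fin n) : ∑ w, Pv n ε v w = 1 := by
  simp only [Pv_eq, P0_apply, ← mul_sum, sum_add_distrib, sum_agreeSign, sum_const, card_univ,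
    nsmul_eq_mul, mul_one, mul_zero, add_zero]
  exact inv_mul_cancel₀ (by positivity)

lemma sum_Pv_mul_Pv (ε : ℝ) (u v : Fin n) :
    ∑ w, Pv n ε u w * Pv n ε v w
      = (Fintype.card (Omg n) : ℝ)⁻¹ * (1 + if u = v then 4 * ε ^ 2 else 0) := by
  have hexpand : ∀ w, Pv n ε u w * Pv n ε v w = (Fintype.card (Omg n) : ℝ)⁻¹ ^ 2 *
      (1 + 2 * ε * agreeSign u w + 2 * ε * agreeSign v w
        + 4 * ε ^ 2 * (agreeSign u w * agreeSign v w)) := by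
    intro w
    rw [Pv_eq, Pv_eq, P0_apply]
    ring
  simp only [hexpand, ← mul_sum, sum_add_distrib, sum_agreeSign, sum_agreeSign_mul_agreeSign,
    sum_const, card_univ, nsmul_eq_mul, mul_one]
  split_ifs <;> field_simp <;> ring

end SingleRound

section Rounds

variable {n T : ℕ}

lemma prodP_mul_prodP (P Q : Omg n → ℝ) (g : Fin T → Omg n) :
    prodP T P g * prodP T Q g = prodP T (fun w => P w * Q w) g :=
  prod_mul_distrib.symm

lemma sum_prodP (P : Omg n → ℝ) : ∑ g, prodP T P g = (∑ w, P w) ^ T := by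
  simp [prodP, ← Fintype.prod_sum]

lemma prodP_P0 (g : Fin T → Omg n) :
    prodP T (P0 n) g = (Fintype.card (Fin T → Omg n) : ℝ)⁻¹ := by
  simp only [prodP, P0_apply, prod_const, card_univ, Fintype.card_fin, Fintype.card_fun,
    Nat.cast_pow, inv_pow]

lemma sum_Pmix (hn : n ≠ 0) (ε : ℝ) : ∑ g, Pmix n ε T g = 1 := by
  simp only [Pmix, ← mul_sum]
  rw [sum_comm]
  simp [sum_prodP, sum_Pv, hn]

lemma card_mul_sum_Pmix_sq (hn : n ≠ 0) (ε : ℝ) :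
    Fintype.card (Fin T → Omg n) * ∑ g, Pmix n ε T g ^ 2 = 1 + ((1 + 4 * ε ^ 2) ^ T - 1) / n := by
  have hsq : ∀ g, Pmix n ε T g ^ 2 = (1 / (n : ℝ)) ^ 2 *
      ∑ u, ∑ v, prodP T (fun w => Pv n ε u w * Pv n ε v w) g := by
    intro g
    rw [Pmix, mul_pow, sq (∑ v, _), sum_mul_sum]
    simp only [prodP_mul_prodP]
  have hpair : ∀ u v, ∑ g, prodP T (fun w => Pv n ε u w * Pv n ε v w) g
      = (Fintype.card (Fin T → Omg n) : ℝ)⁻¹ * (if u = v then (1 + 4 * ε ^ 2) ^ T else 1) := by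
    intro u v
    rw [sum_prodP, sum_Pv_mul_Pv, mul_pow, Fintype.card_fun, Fintype.card_fin, Nat.cast_pow,
      inv_pow]
    split_ifs <;> simp
  simp only [hsq, ← mul_sum]
  rw [sum_comm, sum_congr rfl fun u _ => sum_comm]
  simp only [hpair, ← mul_sum]
  simp [sum_ite, filter_eq, filter_ne, Nat.cast_sub (Nat.one_le_iff_ne_zero.2 hn)]
  field_simp
  ring

lemma card_mul_sum_sq_Pmix_sub_P0 (hn : n ≠ 0) (ε : ℝ) :
    Fintype.card (Fin T → Omg n) * ∑ g, (Pmix n ε T g - prodP T (P0 n) g) ^ 2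
      = ((1 + 4 * ε ^ 2) ^ T - 1) / n := by
  simp only [prodP_P0]
  rw [card_mul_sum_sq_sub_inv_card (sum_Pmix hn ε), card_mul_sum_Pmix_sq hn]
  ring

end Rounds

theorem stmt10_general (n T : ℕ) (ε : ℝ) (hn : 10 ≤ n)
    (hεT : 4 * ε ^ 2 * (T : ℝ) ≤ Real.log ((n : ℝ) / 10))
    (E : Finset (Fin T → Omg n)) :
    |(∑ g ∈ E, Pmix n ε T g) - ∑ g ∈ E, prodP T (P0 n) g| ≤ 1 / 4 := by
  have hn0 : n ≠ 0 := by omega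
  have hn10 : (0 : ℝ) < n / 10 := by positivity
  have hmass : ∑ g, Pmix n ε T g = ∑ g, prodP T (P0 n) g := by
    simp [sum_Pmix hn0, prodP_P0]
  have hgrowth : (1 + 4 * ε ^ 2) ^ T ≤ n / 10 :=
    calc (1 + 4 * ε ^ 2) ^ T ≤ Real.exp (4 * ε ^ 2 * T) :=
          one_add_pow_le_exp_mul (by nlinarith [sq_nonneg ε]) T
      _ ≤ n / 10 := by rwa [← Real.exp_log hn10, Real.exp_le_exp]
  have hchiSq : ((1 + 4 * ε ^ 2) ^ T - 1) / n ≤ 1 / 10 := by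
    rw [div_le_iff₀ (by positivity)]
    linarith
  have htv := four_mul_sq_sum_sub_sum_le hmass E
  rw [card_mul_sum_sq_Pmix_sub_P0 hn0] at htv
  set x := ∑ g ∈ E, Pmix n ε T g - ∑ g ∈ E, prodP T (P0 n) g
  nlinarith [sq_abs x, abs_nonneg x]

/-- if `4ε²T ≤ ln(n/10)` then for every event `E ⊆ Ω^T`,
`|P_mix^T(E) − P_0^T(E)| ≤ 1/4`. -/
theorem stmt10 (n T : ℕ) (ε : ℝ) (hε : 0 < ε) (hε' : ε ≤ 0.1) (hn : 10 ≤ n) (hT : 1 ≤ T)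
    (hεT : 4 * ε ^ 2 * (T : ℝ) ≤ Real.log ((n : ℝ) / 10))
    (E : Finset (Fin T → Omg n)) :
    |(∑ g ∈ E, Pmix n ε T g) - ∑ g ∈ E, prodP T (P0 n) g| ≤ 1 / 4 :=
  stmt10_general n T ε hn hεT E
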